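/- For the infinite countable torus 𝕋^ℕ with γ(ξ_m) = 2π Σ_ℓ |m_ℓ| defined on the dual group {ξ_m : m ∈ ℤ^ℕ with finite support}, the Sobolev space H¹_γ(𝕋^ℕ) is not compactly embedded in L²(𝕋^ℕ). -/

import Mathlib

/-!
The coordinate characters `x ↦ exp (2πi x_k)` have a single nonzero Fourier coefficient, at a
frequency of weight `γ = 2π`, so they are bounded in `H¹_γ`. They are also orthonormal in `L²`
(a nontrivial character takes the value `-1` somewhere, so translation invariance of Haar measure
kills its integral), hence pairwise at distance `√2`, and no subsequence is Cauchy.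
-/

open MeasureTheory ENNReal Real

section Orthonormal

variable {𝕜 E ι : Type*} [RCLike 𝕜] [NormedAddCommGroup E] [InnerProductSpace 𝕜 E]
  {v : ι → E}

theorem Orthonormal.norm_sub_sq_eq_two (hv : Orthonormal 𝕜 v) {i j : ι} (hij : i ≠ j) :
    ‖v i - v j‖ ^ 2 = 2 := by
  rw [_root_.norm_sub_sq (𝕜 := 𝕜), hv.1 i, hv.1 j, hv.2 hij]
  norm_num

theorem Orthonormal.not_cauchySeq_comp (hv : Orthonormal 𝕜 v) {s : ℕ → ι}
    (hs : Function.Injective s) : ¬ CauchySeq (v ∘ s) := by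
  intro hcauchy
  obtain ⟨N, hN⟩ := Metric.cauchySeq_iff.mp hcauchy 1 one_pos
  have hclose : ‖v (s (N + 1)) - v (s N)‖ < 1 := by
    simpa only [dist_eq_norm, Function.comp_apply] using hN (N + 1) N.le_succ N le_rfl
  have hfar := hv.norm_sub_sq_eq_two (hs.ne N.succ_ne_self)
  nlinarith [norm_nonneg (v (s (N + 1)) - v (s N))]

end Orthonormal

section TorusChar

variable {ι : Type*} {T : ℝ}

noncomputable def torusChar (n : ι →₀ ℤ) (x : ι → AddCircle T) : ℂ :=
  ∏ ℓ ∈ n.support, fourier (n ℓ) (x ℓ)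

theorem torusChar_eq_prod_of_support_subset (n : ι →₀ ℤ) {s : Finset ι} (hs : n.support ⊆ s)
    (x : ι → AddCircle T) : torusChar n x = ∏ ℓ ∈ s, fourier (n ℓ) (x ℓ) :=
  Finset.prod_subset hs fun ℓ _ hℓ => by rw [Finsupp.notMem_support_iff.mp hℓ, fourier_zero]

theorem torusChar_mul_conj (n m : ι →₀ ℤ) (x : ι → AddCircle T) :
    torusChar n x * (starRingEnd ℂ) (torusChar m x) = torusChar (n - m) x := by
  classical
  set s := n.support ∪ m.support ∪ (n - m).support
  rw [torusChar_eq_prod_of_support_subset n (s := s) (by intro a ha; simp [s, ha]),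
    torusChar_eq_prod_of_support_subset m (s := s) (by intro a ha; simp [s, ha]),
    torusChar_eq_prod_of_support_subset (n - m) (s := s) (by intro a ha; simp [s, ha]),
    map_prod, ← Finset.prod_mul_distrib]
  refine Finset.prod_congr rfl fun ℓ _ => ?_
  rw [← fourier_neg, ← fourier_add, Finsupp.sub_apply, sub_eq_add_neg]

theorem torusChar_add (n : ι →₀ ℤ) (a x : ι → AddCircle T) :
    torusChar n (a + x) = torusChar n a * torusChar n x := by
  rw [torusChar, torusChar, torusChar, ← Finset.prod_mul_distrib]
  refine Finset.prod_congr rfl fun ℓ _ => ?_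
  simp only [Pi.add_apply, fourier_apply, smul_add, AddCircle.toCircle_add, Circle.coe_mul]

theorem norm_torusChar (n : ι →₀ ℤ) (x : ι → AddCircle T) : ‖torusChar n x‖ = 1 := by
  rw [torusChar, norm_prod]
  exact Finset.prod_eq_one fun ℓ _ => Circle.norm_coe _

theorem measurable_torusChar (n : ι →₀ ℤ) : Measurable (torusChar (T := T) n) :=
  Finset.measurable_prod _ fun ℓ _ =>
    (fourier (n ℓ)).continuous.measurable.comp (measurable_pi_apply ℓ)

theorem exists_torusChar_eq_neg_one (hT : 0 < T) {n : ι →₀ ℤ} (hn : n ≠ 0) :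
    ∃ a : ι → AddCircle T, torusChar n a = -1 := by
  classical
  obtain ⟨j, hj⟩ := Finsupp.ne_iff.mp hn
  refine ⟨Pi.single j ((T / 2 / n j : ℝ) : AddCircle T), ?_⟩
  rw [torusChar, Finset.prod_eq_single_of_mem j (Finsupp.mem_support_iff.mpr hj)
      fun ℓ _ hℓ => by rw [Pi.single_eq_of_ne hℓ, fourier_eval_zero],
    Pi.single_eq_same, ← zero_add ((T / 2 / n j : ℝ) : AddCircle T),
    fourier_add_half_inv_index hj hT, fourier_eval_zero]

end TorusChar

section Integral

variable {ι : Type*} {T : ℝ} (μ : Measure (ι → AddCircle T))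

theorem integral_torusChar_zero [IsProbabilityMeasure μ] :
    ∫ x, torusChar (0 : ι →₀ ℤ) x ∂μ = 1 := by
  simp [torusChar]

theorem integral_torusChar_of_ne_zero [Fact (0 < T)] [μ.IsAddLeftInvariant] {n : ι →₀ ℤ}
    (hn : n ≠ 0) : ∫ x, torusChar n x ∂μ = 0 := by
  obtain ⟨a, ha⟩ := exists_torusChar_eq_neg_one (Fact.out : 0 < T) hn
  exact integral_eq_zero_of_add_left_eq_neg fun x => by rw [torusChar_add, ha, neg_one_mul]

theorem memLp_torusChar [IsFiniteMeasure μ] (n : ι →₀ ℤ) : MemLp (torusChar n) 2 μ :=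
  MemLp.of_bound (measurable_torusChar n).aestronglyMeasurable 1
    (Filter.Eventually.of_forall fun x => (norm_torusChar n x).le)

noncomputable def torusCharLp [IsFiniteMeasure μ] (n : ι →₀ ℤ) : Lp ℂ 2 μ :=
  (memLp_torusChar μ n).toLp _

theorem integral_mul_conj_torusChar [IsFiniteMeasure μ] (F : Lp ℂ 2 μ) (m : ι →₀ ℤ) :
    ∫ x, F x * (starRingEnd ℂ) (torusChar m x) ∂μ = inner ℂ (torusCharLp μ m) F := by
  rw [L2.inner_def]
  refine integral_congr_ae ?_
  filter_upwards [(memLp_torusChar μ m).coeFn_toLp] with x hx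
  rw [torusCharLp, hx, RCLike.inner_apply, mul_comm]

theorem orthonormal_torusCharLp [Fact (0 < T)] [μ.IsAddLeftInvariant] [IsProbabilityMeasure μ] :
    Orthonormal ℂ (torusCharLp (ι := ι) μ) := by
  classical
  refine orthonormal_iff_ite.mpr fun m n => ?_
  rw [← integral_mul_conj_torusChar]
  calc ∫ x, torusCharLp μ n x * (starRingEnd ℂ) (torusChar m x) ∂μ
      = ∫ x, torusChar (n - m) x ∂μ := by
        refine integral_congr_ae ?_
        filter_upwards [(memLp_torusChar μ n).coeFn_toLp] with x hx
        rw [torusCharLp, hx, torusChar_mul_conj]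
    _ = if m = n then 1 else 0 := by
        split_ifs with hmn
        · rw [hmn, sub_self, integral_torusChar_zero]
        · exact integral_torusChar_of_ne_zero μ (sub_ne_zero.mpr (Ne.symm hmn))

end Integral

section Sobolev

variable {ι : Type*} {T : ℝ} (μ : Measure (ι → AddCircle T))

/-- For `T = 1` this is `‖f‖²` in `H¹_γ` with `γ(ξ_m) = 2π ∑ ℓ, |m ℓ|`. -/
noncomputable def sobolevNormSq (f : Lp ℂ 2 μ) : ℝ≥0∞ :=
  ∑' m : ι →₀ ℤ, ENNReal.ofReal (1 + (2 * π * ∑ ℓ ∈ m.support, |(m ℓ : ℝ)|) ^ 2) *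
    (‖∫ x, f x * (starRingEnd ℂ) (torusChar m x) ∂μ‖₊ : ℝ≥0∞) ^ 2

theorem sobolevNormSq_torusCharLp_single [Fact (0 < T)] [μ.IsAddLeftInvariant]
    [IsProbabilityMeasure μ] (k : ι) :
    sobolevNormSq μ (torusCharLp μ (Finsupp.single k 1)) = ENNReal.ofReal (1 + (2 * π) ^ 2) := by
  classical
  have hcoeff := orthonormal_iff_ite.mp (orthonormal_torusCharLp μ)
  rw [sobolevNormSq, tsum_eq_single (Finsupp.single k 1) fun m hm => by
    rw [integral_mul_conj_torusChar, hcoeff, if_neg hm]; simp]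
  rw [integral_mul_conj_torusChar, hcoeff, if_pos rfl,
    Finsupp.support_single k one_ne_zero]
  norm_num

end Sobolev

theorem stmt_16
    (μ : Measure (ℕ → AddCircle (1 : ℝ)))
    [μ.IsAddHaarMeasure] [IsProbabilityMeasure μ] :
    ¬ (∀ f : ℕ → Lp ℂ 2 μ,
        (∃ C : ℝ≥0∞, C ≠ ⊤ ∧ ∀ k : ℕ,
          ∑' m : (ℕ →₀ ℤ),
            ENNReal.ofReal
              (1 + (2 * π * ∑ ℓ ∈ m.support, |(m ℓ : ℝ)|) ^ 2) *
              (‖∫ x, (f k : (ℕ → AddCircle (1 : ℝ)) → ℂ) x *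
                  (starRingEnd ℂ) (∏ ℓ ∈ m.support, fourier (m ℓ) (x ℓ)) ∂μ‖₊ : ℝ≥0∞) ^ 2
            ≤ C) →
        ∃ (g : Lp ℂ 2 μ) (s : ℕ → ℕ), StrictMono s ∧
          Filter.Tendsto (fun j => f (s j)) Filter.atTop (nhds g)) := by
  intro hcompact
  let coordChar : ℕ → Lp ℂ 2 μ := fun k => torusCharLp μ (Finsupp.single k 1)
  have hbounded : ∀ k, sobolevNormSq μ (coordChar k) ≤ ENNReal.ofReal (1 + (2 * π) ^ 2) :=
    fun k => (sobolevNormSq_torusCharLp_single μ k).le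
  obtain ⟨g, s, hs, hlim⟩ := hcompact coordChar ⟨_, ofReal_ne_top, hbounded⟩
  have horth : Orthonormal ℂ coordChar :=
    (orthonormal_torusCharLp μ).comp _ (Finsupp.single_left_injective one_ne_zero)
  exact horth.not_cauchySeq_comp hs.injective hlim.cauchySeq
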